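/- arXiv:1803.05560 — 2 statements merged into one kernel-verified Lean document; each statement's English description precedes it below -/
import Mathlib

section
/- Let d ≥ 2, γ ∈ (0,1), κ ∈ (0,1/2], and let f ∈ L^1(B_6) satisfy the Dini condition ∫_0^1 ω_{f,B_4}(t)/t dt < ∞. Then ∫_0^1 ω̃_{f,B_4}(t)/t dt < ∞, and there exists a constant C, depending only on d, γ, and κ, such that for every r ∈ (0,1], ∑_{j=0}^∞ ω̃_{f,B_3}(κ^j r) ≤ C ∫_0^r ω̃_{f,B_4}(t)/t dt. -/
/-!
Write `q = κ^γ`, so that `ω̃(r) = ∑_{i ≥ 1} q^i ω(min(κ^{-i} r, 1))`. Averages over `B_a(x)` are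
controlled by averages over `B_b(x) ⊇ B_a(x)` at the cost of the volume ratio `(b/a)^d`, so the
mean oscillation is doubling: `ω(a) ≤ 2 (b/a)^d ω(b)` for `a ≤ b ≤ 1`. Applying this termwise and
shifting the summation index gives `ω̃(s) ≤ 2 κ^{-d} q^{-1} ω̃(t)` whenever `κ s ≤ t ≤ s`.
Integrating against `dt/t` over `(κ^{j+1} r, κ^j r]` then bounds `ω̃_{B_3}(κ^j r) ≤ ω̃_{B_4}(κ^j r)`
by a multiple of the integral of `ω̃_{B_4}(t)/t` over that interval, and these intervals are
disjoint in `(0, r]`. The Dini property of `ω̃` holds termwise: by the scale invariance of `dt/t`,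
`∫_0^1 ω(min(κ^{-i} t, 1)) dt/t = ∫_0^1 ω(s) ds/s + i log(1/κ) ω(1)`, which is summable
against `q^i`.
-/

open MeasureTheory Metric Set

noncomputable section

/-- Mean oscillation of `f` over the ball `B_m`:
`ω_{f,B_m}(r) = sup_{x ∈ B_m} ⨍_{B_r(x)} |f(y) - (f)_{B_r(x)}| dy`. -/
def mOsc (d : ℕ) (f : EuclideanSpace ℝ (Fin d) → ℝ) (m r : ℝ) : ℝ :=
  ⨆ x ∈ ball (0 : EuclideanSpace ℝ (Fin d)) m,
    ⨍ y in ball x r, |f y - ⨍ z in ball x r, f z|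

/-- The modified oscillation `ω̃(r) = ∑_{i=1}^∞ κ^{γ i} (ω(κ^{-i} r)` if `κ^{-i} r < 1`,
`ω(1)` otherwise`)`. -/
def tosc (κ γ : ℝ) (w : ℝ → ℝ) (r : ℝ) : ℝ :=
  ∑' i : ℕ,
    κ ^ (γ * (i + 1 : ℕ)) * (if r / κ ^ (i + 1) < 1 then w (r / κ ^ (i + 1)) else w 1)

section MeasureLemmas

variable {α : Type*} [MeasurableSpace α]

theorem average_abs_sub_average_le {ν : Measure α} [IsFiniteMeasure ν] {f : α → ℝ}
    (hf : Integrable f ν) (c : ℝ) :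
    ⨍ y, |f y - ⨍ z, f z ∂ν| ∂ν ≤ 2 * ⨍ y, |f y - c| ∂ν := by
  set A := ⨍ z, f z ∂ν
  set m := ν.real univ
  have hconst : ∀ k : ℝ, Integrable (fun _ => k) ν := fun k => integrable_const k
  have hfc : Integrable (fun y => |f y - c|) ν := (hf.sub (hconst c)).abs
  have hmean : m * |A - c| ≤ ∫ y, |f y - c| ∂ν := by
    have h : ∫ y, (f y - c) ∂ν = m * (A - c) := by
      rw [integral_sub hf (hconst c), ← measure_smul_average, integral_const, smul_eq_mul,
        smul_eq_mul, mul_sub]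
    calc m * |A - c| = |∫ y, (f y - c) ∂ν| := by rw [h, abs_mul, abs_of_nonneg measureReal_nonneg]
      _ ≤ ∫ y, |f y - c| ∂ν := abs_integral_le_integral_abs
  have htriangle : ∫ y, |f y - A| ∂ν ≤ ∫ y, |f y - c| ∂ν + m * |A - c| := by
    calc ∫ y, |f y - A| ∂ν ≤ ∫ y, (|f y - c| + |c - A|) ∂ν :=
          integral_mono (hf.sub (hconst A)).abs (hfc.add (hconst _)) fun y => abs_sub_le _ _ _
      _ = ∫ y, |f y - c| ∂ν + m * |A - c| := by
          rw [integral_add hfc (hconst _), integral_const, smul_eq_mul, abs_sub_comm]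
  have hkey : ∫ y, |f y - A| ∂ν ≤ 2 * ∫ y, |f y - c| ∂ν := by linarith
  rw [average_eq, average_eq, smul_eq_mul, smul_eq_mul]
  calc m⁻¹ * ∫ y, |f y - A| ∂ν ≤ m⁻¹ * (2 * ∫ y, |f y - c| ∂ν) :=
        mul_le_mul_of_nonneg_left hkey (inv_nonneg.2 measureReal_nonneg)
    _ = 2 * (m⁻¹ * ∫ y, |f y - c| ∂ν) := by ring

theorem integrable_tsum_of_nonneg {μ : Measure α} {F : ℕ → α → ℝ} (hF : ∀ i, Integrable (F i) μ)
    (hF0 : ∀ i, 0 ≤ᵐ[μ] F i) (hsum : Summable fun i => ∫ a, F i a ∂μ) :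
    Integrable (fun a => ∑' i, F i a) μ := by
  have hmeas : ∀ i, AEMeasurable (fun a => ENNReal.ofReal (F i a)) μ :=
    fun i => (hF i).aemeasurable.ennreal_ofReal
  have hfin : ∫⁻ a, ∑' i, ENNReal.ofReal (F i a) ∂μ ≠ ⊤ := by
    rw [lintegral_tsum hmeas]
    simp_rw [← ofReal_integral_eq_lintegral_ofReal (hF _) (hF0 _)]
    rw [← ENNReal.ofReal_tsum_of_nonneg (fun i => integral_nonneg_of_ae (hF0 i)) hsum]
    exact ENNReal.ofReal_ne_top
  refine (integrable_toReal_of_lintegral_ne_top (AEMeasurable.tsum hmeas) hfin).congr ?_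
  filter_upwards [ae_all_iff.2 hF0] with a ha
  rw [ENNReal.tsum_toReal_eq fun _ => ENNReal.ofReal_ne_top]
  exact tsum_congr fun i => ENNReal.toReal_ofReal (ha i)

end MeasureLemmas

theorem mul_log_le_setIntegral_div {g : ℝ → ℝ} {M a b : ℝ} (ha : 0 < a) (hab : a ≤ b)
    (hg : IntegrableOn (fun t => g t / t) (Ioc a b)) (hM : ∀ t ∈ Ioc a b, M ≤ g t) :
    M * Real.log (b / a) ≤ ∫ t in Ioc a b, g t / t := by
  have hinv : ContinuousOn (fun t : ℝ => M * t⁻¹) (Icc a b) :=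
    continuousOn_const.mul (continuousOn_inv₀.mono fun t ht => (ha.trans_le ht.1).ne')
  calc M * Real.log (b / a) = ∫ t in Ioc a b, M * t⁻¹ := by
        rw [integral_const_mul, ← intervalIntegral.integral_of_le hab,
          integral_inv_of_pos ha (ha.trans_le hab)]
    _ ≤ ∫ t in Ioc a b, g t / t := by
        refine setIntegral_mono_on ((hinv.integrableOn_compact isCompact_Icc).mono_set
          Ioc_subset_Icc_self) hg measurableSet_Ioc fun t ht => ?_
        rw [div_eq_mul_inv]
        exact mul_le_mul_of_nonneg_right (hM t ht) (inv_nonneg.2 (ha.trans ht.1).le)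

theorem summable_and_tsum_le_of_le_setIntegral_Ioc {u : ℕ → ℝ} {g : ℝ → ℝ} {C κ r : ℝ}
    (hκ0 : 0 < κ) (hκ1 : κ < 1) (hr : 0 < r) (hC : 0 ≤ C) (hu0 : 0 ≤ u)
    (hg0 : ∀ t ∈ Ioc 0 r, 0 ≤ g t) (hg : IntegrableOn g (Ioc 0 r))
    (hu : ∀ j, u j ≤ C * ∫ t in Ioc (κ ^ (j + 1) * r) (κ ^ j * r), g t) :
    Summable u ∧ ∑' j, u j ≤ C * ∫ t in Ioc 0 r, g t := by
  set s : ℕ → Set ℝ := fun j => Ioc (κ ^ (j + 1) * r) (κ ^ j * r)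
  have hs : ∀ j, s j ⊆ Ioc 0 r := fun j =>
    Ioc_subset_Ioc (by positivity) (mul_le_of_le_one_left hr.le (pow_le_one₀ hκ0.le hκ1.le))
  have hdisj : Pairwise (Function.onFun Disjoint s) := by
    simpa only [Order.succ_eq_add_one] using
      ((pow_right_anti₀ hκ0.le hκ1.le).mul_const hr.le).pairwise_disjoint_on_Ioc_succ
  have hsum := (hasSum_integral_iUnion (fun _ => measurableSet_Ioc) hdisj
    (hg.mono_set (iUnion_subset hs))).mul_left C
  have hunion : ∫ t in ⋃ j, s j, g t ≤ ∫ t in Ioc 0 r, g t :=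
    setIntegral_mono_set hg ((ae_restrict_iff' measurableSet_Ioc).2 (ae_of_all _ hg0))
      (iUnion_subset hs).eventuallyLE
  have hsummable : Summable u := Summable.of_nonneg_of_le hu0 hu hsum.summable
  refine ⟨hsummable, ?_⟩
  calc ∑' j, u j ≤ C * ∫ t in ⋃ j, s j, g t := hasSum_le hu hsummable.hasSum hsum
    _ ≤ C * ∫ t in Ioc 0 r, g t := mul_le_mul_of_nonneg_left hunion hC

theorem ball_subset_ball_of_mem_ball {X : Type*} [PseudoMetricSpace X] {x y : X} {m r R : ℝ}
    (hx : x ∈ ball y m) (hmR : m + r ≤ R) : ball x r ⊆ ball y R :=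
  ball_subset_ball' (by rw [mem_ball] at hx; linarith)

def ballOsc {X : Type*} [PseudoMetricSpace X] [MeasurableSpace X] (μ : Measure X) (f : X → ℝ)
    (x : X) (r : ℝ) : ℝ :=
  ⨍ y in ball x r, |f y - ⨍ z in ball x r, f z ∂μ| ∂μ

section BallOscillation

variable {X : Type*} [PseudoMetricSpace X] [MeasurableSpace X] {μ : Measure X}

theorem ballOsc_nonneg (f : X → ℝ) (x : X) (r : ℝ) : 0 ≤ ballOsc μ f x r := by
  rw [ballOsc, average_eq]
  exact smul_nonneg (inv_nonneg.2 measureReal_nonneg) (integral_nonneg fun _ => abs_nonneg _)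

variable [ProperSpace X] [IsFiniteMeasureOnCompacts μ]

theorem measureReal_ball_pos [μ.IsOpenPosMeasure] (x : X) {r : ℝ} (hr : 0 < r) :
    0 < μ.real (ball x r) :=
  ENNReal.toReal_pos (measure_ball_pos μ x hr).ne' measure_ball_lt_top.ne

theorem ballOsc_le_two_mul_setAverage {f : X → ℝ} {x : X} {r : ℝ}
    (hf : IntegrableOn f (ball x r) μ) (c : ℝ) :
    ballOsc μ f x r ≤ 2 * ⨍ y in ball x r, |f y - c| ∂μ :=
  haveI := isFiniteMeasure_restrict.2 (measure_ball_lt_top (μ := μ) (x := x) (r := r)).ne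
  average_abs_sub_average_le hf c

end BallOscillation

section HaarBallOscillation

open Module

variable {E : Type*} [NormedAddCommGroup E] [NormedSpace ℝ E] [FiniteDimensional ℝ E]
  [MeasurableSpace E] [BorelSpace E] {μ : Measure E} [μ.IsAddHaarMeasure]
  {f : E → ℝ} {x : E} {a b r : ℝ}

theorem measureReal_ball_of_pos (x : E) (hr : 0 < r) :
    μ.real (ball x r) = r ^ finrank ℝ E * μ.real (ball 0 1) := by
  rw [measureReal_def, Measure.addHaar_ball_of_pos μ x hr, ENNReal.toReal_mul,
    ENNReal.toReal_ofReal (by positivity), measureReal_def]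

theorem setAverage_ball_le_mul_setAverage {g : E → ℝ} (hg0 : 0 ≤ g)
    (hg : IntegrableOn g (ball x b) μ) (ha : 0 < a) (hab : a ≤ b) :
    ⨍ y in ball x a, g y ∂μ ≤ (b / a) ^ finrank ℝ E * ⨍ y in ball x b, g y ∂μ := by
  have hvol : (μ.real (ball x a))⁻¹ = (b / a) ^ finrank ℝ E * (μ.real (ball x b))⁻¹ := by
    have hB1 := (measureReal_ball_pos (μ := μ) (0 : E) one_pos).ne'
    have hb := (ha.trans_le hab).ne'
    rw [measureReal_ball_of_pos x ha, measureReal_ball_of_pos x (ha.trans_le hab), div_pow]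
    field_simp
  rw [setAverage_eq, setAverage_eq, smul_eq_mul, smul_eq_mul, hvol, mul_assoc]
  refine mul_le_mul_of_nonneg_left (mul_le_mul_of_nonneg_left ?_ (inv_nonneg.2 measureReal_nonneg))
    (pow_nonneg (div_nonneg (ha.trans_le hab).le ha.le) _)
  exact setIntegral_mono_set hg (ae_of_all _ hg0) (ball_subset_ball hab).eventuallyLE

theorem ballOsc_le_of_le (hf : IntegrableOn f (ball x b) μ) (ha : 0 < a) (hab : a ≤ b) :
    ballOsc μ f x a ≤ 2 * (b / a) ^ finrank ℝ E * ballOsc μ f x b := by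
  set c := ⨍ z in ball x b, f z ∂μ
  have hfc : IntegrableOn (fun y => |f y - c|) (ball x b) μ :=
    (hf.sub (integrableOn_const measure_ball_lt_top.ne)).abs
  calc ballOsc μ f x a ≤ 2 * ⨍ y in ball x a, |f y - c| ∂μ :=
        ballOsc_le_two_mul_setAverage (hf.mono_set (ball_subset_ball hab)) c
    _ ≤ 2 * ((b / a) ^ finrank ℝ E * ballOsc μ f x b) := by
        gcongr
        exact setAverage_ball_le_mul_setAverage (fun y => abs_nonneg _) hfc ha hab
    _ = 2 * (b / a) ^ finrank ℝ E * ballOsc μ f x b := by ring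

theorem ballOsc_le_of_subset {s : Set E} (hf : IntegrableOn f s μ) (hs : ball x r ⊆ s)
    (hr : 0 < r) :
    ballOsc μ f x r ≤ 2 * (r ^ finrank ℝ E * μ.real (ball 0 1))⁻¹ * ∫ y in s, |f y| ∂μ := by
  calc ballOsc μ f x r ≤ 2 * ⨍ y in ball x r, |f y - 0| ∂μ :=
        ballOsc_le_two_mul_setAverage (hf.mono_set hs) 0
    _ = 2 * (r ^ finrank ℝ E * μ.real (ball 0 1))⁻¹ * ∫ y in ball x r, |f y| ∂μ := by
        rw [setAverage_eq, measureReal_ball_of_pos x hr, smul_eq_mul]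
        simp only [sub_zero]
        ring
    _ ≤ 2 * (r ^ finrank ℝ E * μ.real (ball 0 1))⁻¹ * ∫ y in s, |f y| ∂μ := by
        refine mul_le_mul_of_nonneg_left ?_ (by positivity)
        exact setIntegral_mono_set hf.abs (ae_of_all _ fun _ => abs_nonneg _) hs.eventuallyLE

end HaarBallOscillation

def IsDoubling (A : ℝ) (d : ℕ) (W : ℝ → ℝ) : Prop :=
  ∀ ⦃a b : ℝ⦄, 0 < a → a ≤ b → b ≤ 1 → W a ≤ A * (b / a) ^ d * W b

section MeanOscillation

theorem mOsc_nonneg (d : ℕ) (f : EuclideanSpace ℝ (Fin d) → ℝ) (m r : ℝ) : 0 ≤ mOsc d f m r :=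
  Real.iSup_nonneg fun x => Real.iSup_nonneg fun _ => ballOsc_nonneg f x r

variable {d : ℕ} {f : EuclideanSpace ℝ (Fin d) → ℝ} {m m' r R : ℝ}

theorem mOsc_le_of_forall {M : ℝ} (hM : 0 ≤ M)
    (h : ∀ x ∈ ball (0 : EuclideanSpace ℝ (Fin d)) m, ballOsc volume f x r ≤ M) :
    mOsc d f m r ≤ M :=
  Real.iSup_le (fun x => Real.iSup_le (h x) hM) hM

theorem ballOsc_le_mOsc (hf : IntegrableOn f (ball 0 R)) (hmR : m + r ≤ R) (hr : 0 < r)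
    {x : EuclideanSpace ℝ (Fin d)} (hx : x ∈ ball 0 m) :
    ballOsc volume f x r ≤ mOsc d f m r := by
  set M := 2 * (r ^ Module.finrank ℝ (EuclideanSpace ℝ (Fin d)) *
    volume.real (ball (0 : EuclideanSpace ℝ (Fin d)) 1))⁻¹ * ∫ y in ball 0 R, |f y|
  have hbdd : BddAbove (range fun z => ⨆ _ : z ∈ ball 0 m, ballOsc volume f z r) := by
    refine ⟨max M 0, ?_⟩
    rintro _ ⟨z, rfl⟩
    refine Real.iSup_le (fun hz => ?_) (le_max_right _ _)
    exact (ballOsc_le_of_subset hf (ball_subset_ball_of_mem_ball hz hmR) hr).trans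
      (le_max_left _ _)
  exact (ciSup_pos hx).symm.le.trans (le_ciSup hbdd x)

theorem mOsc_mono (hf : IntegrableOn f (ball 0 R)) (hmm' : m ≤ m') (hmR : m' + r ≤ R)
    (hr : 0 < r) : mOsc d f m r ≤ mOsc d f m' r :=
  mOsc_le_of_forall (mOsc_nonneg d f m' r) fun _ hx =>
    ballOsc_le_mOsc hf hmR hr (ball_subset_ball hmm' hx)

theorem isDoubling_mOsc (hf : IntegrableOn f (ball 0 R)) (hmR : m + 1 ≤ R) :
    IsDoubling 2 d (mOsc d f m) := by
  intro a b ha hab hb1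
  have hb := ha.trans_le hab
  have := mOsc_nonneg d f m b
  refine mOsc_le_of_forall (by positivity) fun x hx => ?_
  calc ballOsc volume f x a ≤ 2 * (b / a) ^ d * ballOsc volume f x b := by
        simpa only [finrank_euclideanSpace_fin] using
          ballOsc_le_of_le (hf.mono_set (ball_subset_ball_of_mem_ball hx (by linarith))) ha hab
    _ ≤ 2 * (b / a) ^ d * mOsc d f m b := by
        gcongr
        exact ballOsc_le_mOsc hf (by linarith) hb hx

end MeanOscillation

section ModifiedOscillation

variable {κ γ A : ℝ} {d : ℕ} {V W : ℝ → ℝ}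

theorem tosc_eq_tsum (hκ0 : 0 < κ) (W : ℝ → ℝ) (r : ℝ) :
    tosc κ γ W r = ∑' i : ℕ, (κ ^ γ) ^ (i + 1) * W (min (r / κ ^ (i + 1)) 1) := by
  refine tsum_congr fun i => ?_
  rw [Real.rpow_mul hκ0.le, Real.rpow_natCast]
  split_ifs with h
  · rw [min_eq_left h.le]
  · rw [min_eq_right (not_lt.1 h)]

theorem IsDoubling.min_one_le (hW : IsDoubling A d W) (hA : 0 ≤ A) (hW0 : 0 ≤ W) {ρ s : ℝ}
    (hρ : 0 < ρ) (hρ1 : ρ ≤ 1) (hs : ρ ≤ s) : W (min s 1) ≤ A * (1 / ρ) ^ d * W 1 := by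
  have hρs : ρ ≤ min s 1 := le_min hs hρ1
  have := hW0 1
  calc W (min s 1) ≤ A * (1 / min s 1) ^ d * W 1 :=
        hW (hρ.trans_le hρs) (min_le_right _ _) le_rfl
    _ ≤ A * (1 / ρ) ^ d * W 1 := by
        gcongr
        exact one_div_nonneg.2 (hρ.trans_le hρs).le

theorem IsDoubling.min_one_le_mul (hW : IsDoubling A d W) (hA : 0 ≤ A) (hW0 : 0 ≤ W)
    {a b l : ℝ} (ha : 0 < a) (hab : a ≤ b) (hbl : b ≤ l * a) :
    W (min a 1) ≤ A * l ^ d * W (min b 1) := by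
  have hl : 1 ≤ l := by nlinarith
  have hmin : min b 1 ≤ l * min a 1 := by
    rw [mul_min_of_nonneg _ _ (by linarith), mul_one]
    exact min_le_min hbl hl
  have hma : 0 < min a 1 := lt_min ha one_pos
  have := hW0 (min b 1)
  calc W (min a 1) ≤ A * (min b 1 / min a 1) ^ d * W (min b 1) :=
        hW hma (min_le_min_right 1 hab) (min_le_right _ _)
    _ ≤ A * l ^ d * W (min b 1) := by
        gcongr
        · exact div_nonneg (hma.trans_le (min_le_min_right 1 hab)).le hma.le
        · exact div_le_of_le_mul₀ hma.le (by linarith) hmin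

theorem summable_tosc_terms (hκ0 : 0 < κ) (hκ1 : κ < 1) (hγ : 0 < γ) (hW : IsDoubling A d W)
    (hA : 0 ≤ A) (hW0 : 0 ≤ W) {r : ℝ} (hr : 0 < r) :
    Summable fun i : ℕ => (κ ^ γ) ^ (i + 1) * W (min (r / κ ^ (i + 1)) 1) := by
  have hq0 : 0 ≤ κ ^ γ := Real.rpow_nonneg hκ0.le γ
  have hgeom : Summable fun i : ℕ => (κ ^ γ) ^ (i + 1) :=
    (summable_nat_add_iff 1).2 (summable_geometric_of_lt_one hq0 (Real.rpow_lt_one hκ0.le hκ1 hγ))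
  refine Summable.of_nonneg_of_le (fun i => mul_nonneg (by positivity) (hW0 _)) (fun i => ?_)
    (hgeom.mul_right (A * (1 / min r 1) ^ d * W 1))
  refine mul_le_mul_of_nonneg_left (hW.min_one_le hA hW0 (lt_min hr one_pos) (min_le_right _ _)
    ((min_le_left _ _).trans (le_div_self hr.le (by positivity) ?_))) (by positivity)
  exact pow_le_one₀ hκ0.le hκ1.le

theorem tosc_nonneg (hκ0 : 0 < κ) (hW0 : 0 ≤ W) (r : ℝ) : 0 ≤ tosc κ γ W r := by
  rw [tosc_eq_tsum hκ0]
  exact tsum_nonneg fun i => mul_nonneg (by positivity) (hW0 _)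

theorem tosc_mono (hκ0 : 0 < κ) (hκ1 : κ < 1) (hγ : 0 < γ) (hW : IsDoubling A d W)
    (hA : 0 ≤ A) (hW0 : 0 ≤ W) (hV0 : 0 ≤ V) (hVW : ∀ s ∈ Ioc 0 1, V s ≤ W s) {r : ℝ}
    (hr : 0 < r) : tosc κ γ V r ≤ tosc κ γ W r := by
  have hle : ∀ i : ℕ, (κ ^ γ) ^ (i + 1) * V (min (r / κ ^ (i + 1)) 1) ≤
      (κ ^ γ) ^ (i + 1) * W (min (r / κ ^ (i + 1)) 1) := fun i =>
    mul_le_mul_of_nonneg_left (hVW _ ⟨lt_min (by positivity) one_pos, min_le_right _ _⟩)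
      (by positivity)
  have hWsum := summable_tosc_terms hκ0 hκ1 hγ hW hA hW0 hr
  rw [tosc_eq_tsum hκ0, tosc_eq_tsum hκ0]
  exact (hWsum.of_nonneg_of_le (fun i => mul_nonneg (by positivity) (hV0 _)) hle).tsum_le_tsum
    hle hWsum

theorem tosc_le_of_mul_le_of_le (hκ0 : 0 < κ) (hκ1 : κ < 1) (hγ : 0 < γ)
    (hW : IsDoubling A d W) (hA : 0 ≤ A) (hW0 : 0 ≤ W) {s t : ℝ} (hs : 0 < s)
    (hst : κ * s ≤ t) (hts : t ≤ s) :
    tosc κ γ W s ≤ A * κ⁻¹ ^ d * (κ ^ γ)⁻¹ * tosc κ γ W t := by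
  set q := κ ^ γ
  have hq : 0 < q := Real.rpow_pos_of_pos hκ0 γ
  set K := A * κ⁻¹ ^ d * q⁻¹
  set T : ℕ → ℝ := fun i => q ^ (i + 1) * W (min (t / κ ^ (i + 1)) 1)
  have hT := summable_tosc_terms hκ0 hκ1 hγ hW hA hW0 ((mul_pos hκ0 hs).trans_le hst)
  have hterm : ∀ i : ℕ, q ^ (i + 1) * W (min (s / κ ^ (i + 1)) 1) ≤ K * T (i + 1) := by
    intro i
    have hshift : t / κ ^ (i + 1 + 1) = κ⁻¹ * (t / κ ^ (i + 1)) := by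
      rw [pow_succ]; field_simp
    have hab : s / κ ^ (i + 1) ≤ t / κ ^ (i + 1 + 1) := by
      rw [hshift, ← mul_div_assoc]
      gcongr
      exact (le_inv_mul_iff₀ hκ0).2 hst
    have hbl : t / κ ^ (i + 1 + 1) ≤ κ⁻¹ * (s / κ ^ (i + 1)) := by
      rw [hshift]
      gcongr
    calc q ^ (i + 1) * W (min (s / κ ^ (i + 1)) 1)
        ≤ q ^ (i + 1) * (A * κ⁻¹ ^ d * W (min (t / κ ^ (i + 1 + 1)) 1)) :=
          mul_le_mul_of_nonneg_left (hW.min_one_le_mul hA hW0 (by positivity) hab hbl)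
            (by positivity)
      _ = K * T (i + 1) := by simp only [K, T, pow_succ q (i + 1)]; field_simp
  have hTnn : ∀ i, 0 ≤ T i := fun i => mul_nonneg (by positivity) (hW0 _)
  rw [tosc_eq_tsum hκ0, tosc_eq_tsum hκ0]
  calc ∑' i : ℕ, q ^ (i + 1) * W (min (s / κ ^ (i + 1)) 1)
      ≤ ∑' i : ℕ, K * T (i + 1) :=
        (summable_tosc_terms hκ0 hκ1 hγ hW hA hW0 hs).tsum_le_tsum hterm
          (((summable_nat_add_iff 1).2 hT).mul_left K)
    _ = K * ∑' i : ℕ, T (i + 1) := tsum_mul_left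
    _ ≤ K * ∑' i : ℕ, T i := by
        rw [hT.tsum_eq_zero_add]
        exact mul_le_mul_of_nonneg_left (le_add_of_nonneg_left (hTnn 0)) (by positivity)

end ModifiedOscillation

section DiniCondition

variable {κ γ A : ℝ} {d : ℕ} {W : ℝ → ℝ}

theorem intervalIntegrable_and_integral_min_one_div
    (hdini : IntegrableOn (fun s => W s / s) (Ioc 0 1)) {R : ℝ} (hR : 1 ≤ R) :
    IntervalIntegrable (fun s => W (min s 1) / s) volume 0 R ∧
      ∫ s in 0..R, W (min s 1) / s = (∫ s in Ioc 0 1, W s / s) + W 1 * Real.log R := by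
  have heq01 : EqOn (fun s => W (min s 1) / s) (fun s => W s / s) (Ioc 0 1) := fun s hs => by
    simp only [min_eq_left hs.2]
  have heq1R : EqOn (fun s => W (min s 1) / s) (fun s => W 1 * s⁻¹) (uIcc 1 R) := fun s hs => by
    rw [uIcc_of_le hR] at hs
    simp only [min_eq_right hs.1, div_eq_mul_inv]
  have h01 : IntervalIntegrable (fun s => W (min s 1) / s) volume 0 1 :=
    (intervalIntegrable_iff_integrableOn_Ioc_of_le zero_le_one).2
      (hdini.congr_fun heq01.symm measurableSet_Ioc)
  have h1R : IntervalIntegrable (fun s => W (min s 1) / s) volume 1 R := by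
    refine ContinuousOn.intervalIntegrable (ContinuousOn.congr ?_ heq1R)
    refine continuousOn_const.mul (continuousOn_inv₀.mono fun s hs => ?_)
    rw [uIcc_of_le hR] at hs
    exact (one_pos.trans_le hs.1).ne'
  refine ⟨h01.trans h1R, ?_⟩
  rw [← intervalIntegral.integral_add_adjacent_intervals h01 h1R,
    intervalIntegral.integral_of_le zero_le_one, setIntegral_congr_fun measurableSet_Ioc heq01,
    intervalIntegral.integral_congr heq1R, intervalIntegral.integral_const_mul,
    integral_inv_of_pos one_pos (one_pos.trans_le hR), div_one]

theorem integrableOn_and_integral_min_one_div_div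
    (hdini : IntegrableOn (fun s => W s / s) (Ioc 0 1)) {c : ℝ} (hc0 : 0 < c) (hc1 : c ≤ 1) :
    IntegrableOn (fun t => W (min (t / c) 1) / t) (Ioc 0 1) ∧
      ∫ t in Ioc 0 1, W (min (t / c) 1) / t = (∫ s in Ioc 0 1, W s / s) + W 1 * Real.log c⁻¹ := by
  obtain ⟨hint, hval⟩ :=
    intervalIntegrable_and_integral_min_one_div hdini ((one_le_inv₀ hc0).2 hc1)
  have hscale : (fun t => W (min (t / c) 1) / t) =
      fun t => c⁻¹ * (W (min (c⁻¹ * t) 1) / (c⁻¹ * t)) := by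
    funext t
    rw [div_eq_inv_mul t c]
    rcases eq_or_ne t 0 with rfl | ht
    · simp
    · field_simp
  have hint' : IntervalIntegrable (fun t => W (min (t / c) 1) / t) volume 0 1 := by
    rw [hscale]
    simpa [hc0.ne'] using (hint.comp_mul_left (c := c⁻¹)).const_mul c⁻¹
  refine ⟨(intervalIntegrable_iff_integrableOn_Ioc_of_le zero_le_one).1 hint', ?_⟩
  have hsubst := intervalIntegral.integral_comp_mul_left (a := 0) (b := 1)
    (fun s => W (min s 1) / s) (inv_ne_zero hc0.ne')
  rw [← intervalIntegral.integral_of_le zero_le_one, hscale, intervalIntegral.integral_const_mul,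
    hsubst, mul_zero, mul_one, ← hval,
    smul_eq_mul, inv_inv, ← mul_assoc, inv_mul_cancel₀ hc0.ne', one_mul]

theorem integrableOn_tosc_div (hκ0 : 0 < κ) (hκ1 : κ < 1) (hγ : 0 < γ) (hW0 : 0 ≤ W)
    (hdini : IntegrableOn (fun s => W s / s) (Ioc 0 1)) :
    IntegrableOn (fun t => tosc κ γ W t / t) (Ioc 0 1) := by
  set q := κ ^ γ
  have hq0 : 0 ≤ q := Real.rpow_nonneg hκ0.le γ
  have hq1 : q < 1 := Real.rpow_lt_one hκ0.le hκ1 hγ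
  set F : ℕ → ℝ → ℝ := fun i t => q ^ (i + 1) * (W (min (t / κ ^ (i + 1)) 1) / t)
  have hterm := fun i : ℕ =>
    integrableOn_and_integral_min_one_div_div hdini (pow_pos hκ0 (i + 1))
      (pow_le_one₀ hκ0.le hκ1.le)
  have hFint : ∀ i : ℕ, ∫ t in Ioc 0 1, F i t = (∫ s in Ioc 0 1, W s / s) * q ^ (i + 1) +
      W 1 * Real.log κ⁻¹ * (((i + 1 : ℕ) : ℝ) * q ^ (i + 1)) := by
    intro i
    rw [integral_const_mul, (hterm i).2, ← inv_pow, Real.log_pow]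
    ring
  have hgeom : Summable fun i : ℕ => q ^ (i + 1) :=
    (summable_nat_add_iff 1).2 (summable_geometric_of_lt_one hq0 hq1)
  have hgeom' : Summable fun i : ℕ => ((i + 1 : ℕ) : ℝ) * q ^ (i + 1) := by
    refine (summable_nat_add_iff (f := fun n : ℕ => (n : ℝ) * q ^ n) 1).2 ?_
    simpa only [pow_one] using summable_pow_mul_geometric_of_norm_lt_one 1
      (by rwa [Real.norm_of_nonneg hq0] : ‖q‖ < 1)
  have hsum : Summable fun i => ∫ t in Ioc 0 1, F i t := by
    simp_rw [hFint]
    exact (hgeom.mul_left _).add (hgeom'.mul_left _)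
  have htsum : (fun t => tosc κ γ W t / t) = fun t => ∑' i, F i t := by
    funext t
    rw [tosc_eq_tsum hκ0, ← tsum_div_const]
    simp only [F, q, mul_div_assoc]
  rw [htsum]
  exact integrable_tsum_of_nonneg (fun i => (hterm i).1.const_mul _)
    (fun i => (ae_restrict_iff' measurableSet_Ioc).2 (ae_of_all _ fun t ht =>
      mul_nonneg (by positivity) (div_nonneg (hW0 _) ht.1.le))) hsum

theorem tosc_le_mul_setIntegral (hκ0 : 0 < κ) (hκ1 : κ < 1) (hγ : 0 < γ)
    (hW : IsDoubling A d W) (hA : 0 ≤ A) (hW0 : 0 ≤ W) {s : ℝ} (hs : 0 < s)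
    (hint : IntegrableOn (fun t => tosc κ γ W t / t) (Ioc (κ * s) s)) :
    tosc κ γ W s ≤
      A * κ⁻¹ ^ d * (κ ^ γ)⁻¹ / Real.log κ⁻¹ * ∫ t in Ioc (κ * s) s, tosc κ γ W t / t := by
  set K := A * κ⁻¹ ^ d * (κ ^ γ)⁻¹
  have hL : 0 < Real.log κ⁻¹ := Real.log_pos ((one_lt_inv₀ hκ0).2 hκ1)
  have h := mul_log_le_setIntegral_div (g := fun t => K * tosc κ γ W t) (M := tosc κ γ W s)
    (mul_pos hκ0 hs) (mul_le_of_le_one_left hs.le hκ1.le)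
    (by simp only [mul_div_assoc]; exact hint.const_mul K)
    (fun t ht => tosc_le_of_mul_le_of_le hκ0 hκ1 hγ hW hA hW0 hs ht.1.le ht.2)
  simp only [mul_div_assoc, integral_const_mul] at h
  rw [div_mul_cancel_right₀ hs.ne'] at h
  rw [div_mul_eq_mul_div, le_div_iff₀ hL]
  linarith

end DiniCondition

theorem stmt_6_general (d : ℕ) (γ κ : ℝ) (hγ : γ ∈ Ioo (0 : ℝ) 1)
    (hκ : κ ∈ Ioc (0 : ℝ) (1 / 2)) :
    ∃ C > 0, ∀ f : EuclideanSpace ℝ (Fin d) → ℝ,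
      IntegrableOn f (ball 0 6) →
      IntegrableOn (fun t => mOsc d f 4 t / t) (Ioc (0 : ℝ) 1) →
      IntegrableOn (fun t => tosc κ γ (mOsc d f 4) t / t) (Ioc (0 : ℝ) 1) ∧
      ∀ r ∈ Ioc (0 : ℝ) 1,
        (Summable fun j : ℕ => tosc κ γ (mOsc d f 3) (κ ^ j * r)) ∧
        ∑' j : ℕ, tosc κ γ (mOsc d f 3) (κ ^ j * r) ≤
          C * ∫ t in Ioc (0 : ℝ) r, tosc κ γ (mOsc d f 4) t / t := by
  obtain ⟨hγ0, -⟩ := hγ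
  obtain ⟨hκ0, hκ2⟩ := hκ
  have hκ1 : κ < 1 := hκ2.trans_lt (by norm_num)
  have hL : 0 < Real.log κ⁻¹ := Real.log_pos ((one_lt_inv₀ hκ0).2 hκ1)
  refine ⟨2 * κ⁻¹ ^ d * (κ ^ γ)⁻¹ / Real.log κ⁻¹, by positivity, fun f hf hdini => ?_⟩
  have hW := isDoubling_mOsc hf (m := 4) (by norm_num)
  have hW0 : 0 ≤ mOsc d f 4 := mOsc_nonneg d f 4
  have hint := integrableOn_tosc_div hκ0 hκ1 hγ0 hW0 hdini
  refine ⟨hint, fun r hr => summable_and_tsum_le_of_le_setIntegral_Ioc hκ0 hκ1 hr.1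
    (by positivity) (fun j => tosc_nonneg hκ0 (mOsc_nonneg d f 3) _)
    (fun t ht => div_nonneg (tosc_nonneg hκ0 hW0 t) ht.1.le)
    (hint.mono_set (Ioc_subset_Ioc_right hr.2)) fun j => ?_⟩
  have hs : 0 < κ ^ j * r := mul_pos (pow_pos hκ0 j) hr.1
  have hs1 : κ ^ j * r ≤ 1 := mul_le_one₀ (pow_le_one₀ hκ0.le hκ1.le) hr.1.le hr.2
  calc tosc κ γ (mOsc d f 3) (κ ^ j * r) ≤ tosc κ γ (mOsc d f 4) (κ ^ j * r) :=
        tosc_mono hκ0 hκ1 hγ0 hW zero_le_two hW0 (mOsc_nonneg d f 3)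
          (fun s hs => mOsc_mono hf (by norm_num) (by linarith [hs.2]) hs.1) hs
    _ ≤ _ := by
        rw [pow_succ', mul_assoc κ]
        exact tosc_le_mul_setIntegral hκ0 hκ1 hγ0 hW zero_le_two hW0 hs
          (hint.mono_set (Ioc_subset_Ioc (mul_pos hκ0 hs).le hs1))

/-- Lemma 8.1 (a) for full mean oscillations: if `f ∈ L¹(B_6)` satisfies the Dini condition,
then `ω̃_{f,B_4}` also satisfies it, and for a constant `C = C(d, γ, κ)`,
`∑_{j=0}^∞ ω̃_{f,B_3}(κ^j r) ≤ C ∫_0^r ω̃_{f,B_4}(t)/t dt` for all `r ∈ (0,1]`. -/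
theorem stmt_6 (d : ℕ) (hd : 2 ≤ d) (γ κ : ℝ) (hγ : γ ∈ Ioo (0 : ℝ) 1)
    (hκ : κ ∈ Ioc (0 : ℝ) (1 / 2)) :
    ∃ C > 0, ∀ f : EuclideanSpace ℝ (Fin d) → ℝ,
      IntegrableOn f (ball 0 6) →
      IntegrableOn (fun t => mOsc d f 4 t / t) (Ioc (0 : ℝ) 1) →
      IntegrableOn (fun t => tosc κ γ (mOsc d f 4) t / t) (Ioc (0 : ℝ) 1) ∧
      ∀ r ∈ Ioc (0 : ℝ) 1,
        (Summable fun j : ℕ => tosc κ γ (mOsc d f 3) (κ ^ j * r)) ∧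
        ∑' j : ℕ, tosc κ γ (mOsc d f 3) (κ ^ j * r) ≤
          C * ∫ t in Ioc (0 : ℝ) r, tosc κ γ (mOsc d f 4) t / t :=
  stmt_6_general d γ κ hγ hκ
end
end

section
/- Let d ≥ 2 and λ ∈ (0,1], and for each α, β ∈ {1, …, d} let A^{αβ} be a real d×d matrix such that |A^{αβ}| ≤ λ^{−1} for all α, β and ∑_{α,β=1}^d A^{αβ} ξ_β · ξ_α ≥ λ ∑_{α=1}^d |ξ_α|^2 for all vectors ξ_1, …, ξ_d ∈ ℝ^d. Then there exists a constant C, depending only on d and λ, such that: for all vectors P_1, …, P_d ∈ ℝ^d, all q ∈ ℝ, and all ℓ ∈ ℝ satisfying ∑_{α=1}^d P_α^α = ℓ (where P_α^α denotes the α-th component of P_α), setting V := ∑_{β=1}^d A^{1β} P_β + q e_1, one has ∑_{α=1}^d |P_α| + |q| ≤ C ( |V| + ∑_{α=2}^d |P_α| + |ℓ| ). -/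
open Metric Set Finset
open scoped RealInnerProductSpace

noncomputable section

/-!
Write `P₁ = P₁¹ e₁ + w` with `w ⟂ e₁`. The trace constraint bounds `P₁¹` by
`|ℓ| + ∑_{α ≥ 2} |P_α|`. Pairing `V = A¹¹ w + P₁¹ A¹¹ e₁ + ∑_{β ≥ 2} A^{1β} P_β + q e₁` with `w`
kills the pressure, since `w ⟂ e₁`, so the coercivity of the diagonal block `A¹¹` (a consequence
of the Legendre condition) bounds `|w|` linearly by the data. Finally `q e₁ = V - ∑_β A^{1β} P_β`
bounds `|q|`.
-/

section Coercivity

variable {F : Type*} [NormedAddCommGroup F] [InnerProductSpace ℝ F]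

theorem mul_norm_le_of_mul_norm_sq_le_inner {c : ℝ} {u w : F} (h : c * ‖w‖ ^ 2 ≤ ⟪u, w⟫) :
    c * ‖w‖ ≤ ‖u‖ := by
  rcases (norm_nonneg w).eq_or_lt with hw | hw
  · simp [← hw]
  · refine le_of_mul_le_mul_right ?_ hw
    calc c * ‖w‖ * ‖w‖ = c * ‖w‖ ^ 2 := by ring
      _ ≤ ⟪u, w⟫ := h
      _ ≤ ‖u‖ * ‖w‖ := real_inner_le_norm u w

theorem mul_norm_le_norm_apply_add_smul {c : ℝ} {B : F →L[ℝ] F}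
    (hB : ∀ v, c * ‖v‖ ^ 2 ≤ ⟪B v, v⟫) {e w : F} (hw : ⟪e, w⟫ = 0) (q : ℝ) :
    c * ‖w‖ ≤ ‖B w + q • e‖ :=
  mul_norm_le_of_mul_norm_sq_le_inner <| by
    simpa [inner_add_left, real_inner_smul_left, hw] using hB w

variable {ι : Type*}

theorem norm_sum_apply_le {M : ℝ} {A : ι → F →L[ℝ] F} (hA : ∀ β, ‖A β‖ ≤ M) (P : ι → F)
    (s : Finset ι) : ‖∑ β ∈ s, A β (P β)‖ ≤ M * ∑ β ∈ s, ‖P β‖ := by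
  rw [Finset.mul_sum]
  refine (norm_sum_le _ _).trans (Finset.sum_le_sum fun β _ => ?_)
  exact (A β).le_of_opNorm_le (hA β) (P β)

theorem abs_le_norm_sum_apply_add_smul {M : ℝ} {A : ι → F →L[ℝ] F} (hA : ∀ β, ‖A β‖ ≤ M)
    (P : ι → F) (s : Finset ι) {e : F} (he : ‖e‖ = 1) (q : ℝ) :
    |q| ≤ ‖∑ β ∈ s, A β (P β) + q • e‖ + M * ∑ β ∈ s, ‖P β‖ :=
  calc |q| = ‖(∑ β ∈ s, A β (P β) + q • e) - ∑ β ∈ s, A β (P β)‖ := by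
        rw [add_sub_cancel_left, norm_smul, he, mul_one, Real.norm_eq_abs]
    _ ≤ ‖∑ β ∈ s, A β (P β) + q • e‖ + ‖∑ β ∈ s, A β (P β)‖ := norm_sub_le _ _
    _ ≤ _ := by gcongr; exact norm_sum_apply_le hA P s

variable [Fintype ι]

def IsLegendreElliptic (lam : ℝ) (A : ι → ι → F →L[ℝ] F) : Prop :=
  ∀ ξ : ι → F, lam * ∑ α, ‖ξ α‖ ^ 2 ≤ ∑ α, ∑ β, ⟪A α β (ξ β), ξ α⟫

theorem IsLegendreElliptic.mul_norm_sq_le_inner_apply_diag [DecidableEq ι] {lam : ℝ}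
    {A : ι → ι → F →L[ℝ] F} (h : IsLegendreElliptic lam A) (i : ι) (v : F) :
    lam * ‖v‖ ^ 2 ≤ ⟪A i i v, v⟫ := by
  simpa [Pi.single_apply, apply_ite, apply_ite (fun y : F => ⟪y, v⟫)] using h (Pi.single i v)

end Coercivity

section Euclidean

variable {ι : Type*} [Fintype ι] [DecidableEq ι]

theorem abs_apply_self_le (P : ι → EuclideanSpace ℝ ι) (i : ι) :
    |P i i| ≤ |∑ α, P α α| + ∑ α ∈ univ.erase i, ‖P α‖ := by
  rw [← Finset.add_sum_erase _ _ (mem_univ i)]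
  set s := ∑ α ∈ univ.erase i, P α α
  have hs : |s| ≤ ∑ α ∈ univ.erase i, ‖P α‖ :=
    (abs_sum_le_sum_abs _ _).trans <| sum_le_sum fun α _ => by
      simpa only [Real.norm_eq_abs] using PiLp.norm_apply_le (P α) α
  calc |P i i| = |(P i i + s) - s| := by ring_nf
    _ ≤ |P i i + s| + |s| := abs_sub _ _
    _ ≤ _ := by gcongr

theorem mul_norm_sub_smul_single_le {lam M : ℝ}
    {A : ι → EuclideanSpace ℝ ι →L[ℝ] EuclideanSpace ℝ ι} (hA : ∀ β, ‖A β‖ ≤ M) {i : ι}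
    (hcoer : ∀ v, lam * ‖v‖ ^ 2 ≤ ⟪A i v, v⟫) (P : ι → EuclideanSpace ℝ ι) (q : ℝ) :
    lam * ‖P i - P i i • EuclideanSpace.single i 1‖ ≤
      ‖∑ β, A β (P β) + q • EuclideanSpace.single i 1‖ + M * |P i i| +
        M * ∑ β ∈ univ.erase i, ‖P β‖ := by
  set e : EuclideanSpace ℝ ι := EuclideanSpace.single i 1
  set w := P i - P i i • e
  have he : ‖e‖ = 1 := by simp [e]
  have hw : ⟪e, w⟫ = 0 := by
    simp [w, e, inner_sub_right, EuclideanSpace.inner_single_left]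
  have hid : A i w + q • e =
      (∑ β, A β (P β) + q • e) - P i i • A i e - ∑ β ∈ univ.erase i, A β (P β) := by
    rw [← Finset.add_sum_erase _ _ (mem_univ i), map_sub, map_smul]
    abel
  have hAe : ‖P i i • A i e‖ ≤ M * |P i i| := by
    rw [norm_smul, Real.norm_eq_abs, mul_comm]
    gcongr
    simpa [he] using (A i).le_of_opNorm_le (hA i) e
  calc lam * ‖w‖ ≤ ‖A i w + q • e‖ := mul_norm_le_norm_apply_add_smul hcoer hw q
    _ ≤ _ := by
      rw [hid]
      refine (norm_sub_le _ _).trans ?_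
      refine add_le_add ((norm_sub_le _ _).trans (add_le_add_right hAe _)) ?_
      exact norm_sum_apply_le hA P _

theorem sum_norm_add_abs_le_of_coercive {lam : ℝ} (hlam0 : 0 < lam) (hlam1 : lam ≤ 1)
    {A : ι → EuclideanSpace ℝ ι →L[ℝ] EuclideanSpace ℝ ι} (hA : ∀ β, ‖A β‖ ≤ lam⁻¹) {i : ι}
    (hcoer : ∀ v, lam * ‖v‖ ^ 2 ≤ ⟪A i v, v⟫) (P : ι → EuclideanSpace ℝ ι) (q : ℝ) :
    ∑ α, ‖P α‖ + |q| ≤ 11 * lam⁻¹ ^ 3 *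
      (‖∑ β, A β (P β) + q • EuclideanSpace.single i 1‖ + ∑ α ∈ univ.erase i, ‖P α‖ +
        |∑ α, P α α|) := by
  set μ := lam⁻¹
  have hμ : 1 ≤ μ := one_le_inv_iff₀.mpr ⟨hlam0, hlam1⟩
  set e : EuclideanSpace ℝ ι := EuclideanSpace.single i 1
  set V := ∑ β, A β (P β) + q • e
  set S := ∑ α ∈ univ.erase i, ‖P α‖
  set R := ‖V‖ + S + |∑ α, P α α| with hRdef
  have hS : 0 ≤ S := sum_nonneg fun _ _ => norm_nonneg _
  have hdiag : |P i i| ≤ |∑ α, P α α| + S := abs_apply_self_le P i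
  have htan : ‖P i - P i i • e‖ ≤ μ * (‖V‖ + μ * |P i i| + μ * S) :=
    (le_inv_mul_iff₀ hlam0).mpr (mul_norm_sub_smul_single_le hA hcoer P q)
  have hrow : ‖P i‖ ≤ |P i i| + ‖P i - P i i • e‖ :=
    calc ‖P i‖ = ‖P i i • e + (P i - P i i • e)‖ := by rw [add_sub_cancel]
      _ ≤ |P i i| + ‖P i - P i i • e‖ := by
        simpa [e, norm_smul] using norm_add_le (P i i • e) (P i - P i i • e)
  have hq : |q| ≤ ‖V‖ + μ * ∑ α, ‖P α‖ := abs_le_norm_sum_apply_add_smul hA P univ (by simp [e]) q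
  have hsplit : ∑ α, ‖P α‖ = ‖P i‖ + S := (add_sum_erase _ _ (mem_univ i)).symm
  have hR : 0 ≤ R := by positivity
  have hVR : ‖V‖ ≤ R := by linarith [abs_nonneg (∑ α, P α α)]
  have hdiagS : |P i i| + S ≤ 2 * R := by linarith [norm_nonneg V, abs_nonneg (∑ α, P α α)]
  have hμR : R ≤ μ * R := le_mul_of_one_le_left hR hμ
  have hμ2R : μ * R ≤ μ ^ 2 * R := by nlinarith
  have hμ3R : μ ^ 2 * R ≤ μ ^ 3 * R := by nlinarith
  have hsumP : ∑ α, ‖P α‖ ≤ 5 * μ ^ 2 * R := by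
    have : μ * (‖V‖ + μ * |P i i| + μ * S) ≤ 3 * μ ^ 2 * R :=
      calc μ * (‖V‖ + μ * |P i i| + μ * S) = μ * ‖V‖ + μ ^ 2 * (|P i i| + S) := by ring
        _ ≤ μ * R + μ ^ 2 * (2 * R) := by gcongr
        _ ≤ 3 * μ ^ 2 * R := by linarith
    linarith
  have : μ * ∑ α, ‖P α‖ ≤ 5 * μ ^ 3 * R :=
    calc μ * ∑ α, ‖P α‖ ≤ μ * (5 * μ ^ 2 * R) := by gcongr
      _ = 5 * μ ^ 3 * R := by ring
  linarith

end Euclidean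

/-- Algebraic recovery of the full gradient and pressure: under the strong ellipticity
condition, there is `C = C(d, λ)` such that whenever `∑_α P_α^α = ℓ` and
`V = ∑_β A^{1β} P_β + q e₁`, one has
`∑_α |P_α| + |q| ≤ C (|V| + ∑_{α ≥ 2} |P_α| + |ℓ|)`. -/
theorem stmt_17 (d : ℕ) (hd : 2 ≤ d) (lam : ℝ) (hlam : lam ∈ Ioc (0 : ℝ) 1) :
    ∃ C > 0, ∀ A : Fin d → Fin d → (EuclideanSpace ℝ (Fin d) →L[ℝ] EuclideanSpace ℝ (Fin d)),
      (∀ α β, ‖A α β‖ ≤ lam⁻¹) →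
      (∀ ξ : Fin d → EuclideanSpace ℝ (Fin d),
        lam * ∑ α, ‖ξ α‖ ^ 2 ≤ ∑ α, ∑ β, ⟪A α β (ξ β), ξ α⟫) →
      ∀ (P : Fin d → EuclideanSpace ℝ (Fin d)) (q ℓ : ℝ),
        (∑ α, P α α) = ℓ →
        (∑ α, ‖P α‖) + |q| ≤
          C * (‖(∑ β, A ⟨0, by omega⟩ β (P β)) +
                  q • EuclideanSpace.single (⟨0, by omega⟩ : Fin d) (1 : ℝ)‖ +
               (∑ α ∈ Finset.univ.erase (⟨0, by omega⟩ : Fin d), ‖P α‖) + |ℓ|) := by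
  obtain ⟨hlam0, hlam1⟩ := hlam
  refine ⟨11 * lam⁻¹ ^ 3, by positivity, fun A hA hell P q ℓ hℓ => ?_⟩
  have hcoer := IsLegendreElliptic.mul_norm_sq_le_inner_apply_diag hell ⟨0, by omega⟩
  exact hℓ ▸ sum_norm_add_abs_le_of_coercive hlam0 hlam1 (hA _) hcoer P q
end
end
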